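/- arXiv:1005.0316 — 2 statements merged into one kernel-verified Lean document; each statement's English description precedes it below -/
import Mathlib

section
/- Let S₁, S₂ be pair-partitions of [2k], let λ be a partition, and let f be a function from {1,…,2k} to the boxes of 2λ that is NOT injective. Then Σ_{S₀} (−1)^{k − |L(S₀,S₁)|} · [f satisfies (P0), (P1) and (P2) with respect to (S₀,S₁,S₂)] = 0, where the sum runs over all pair-partitions S₀ of [2k] and [·] equals 1 if the condition holds and 0 otherwise. -/
open scoped BigOperators

namespace ZonalPP

/-- A pair-partition of `[N]` (with `N` even), encoded as a fixed-point-free involution. -/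
def IsPairPartition {N : ℕ} (s : Equiv.Perm (Fin N)) : Prop :=
  Function.Involutive s ∧ ∀ x, s x ≠ x

noncomputable instance {G α : Type*} [Group G] [MulAction G α] [Finite α] :
    Fintype (MulAction.orbitRel.Quotient G α) :=
  Fintype.ofFinite _

/-- The loops of a couple of pair-partitions: orbits of the subgroup generated by `a, b`. -/
abbrev Loops {N : ℕ} (a b : Equiv.Perm (Fin N)) : Type :=
  MulAction.orbitRel.Quotient (Subgroup.closure ({a, b} : Set (Equiv.Perm (Fin N)))) (Fin N)

/-- The set of elements of a loop. -/
def loopSet {N : ℕ} {a b : Equiv.Perm (Fin N)} (q : Loops a b) : Set (Fin N) :=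
  MulAction.orbitRel.Quotient.orbit q

/-- Number of loops `|L(a,b)|`. -/
noncomputable def numLoops {N : ℕ} (a b : Equiv.Perm (Fin N)) : ℕ :=
  Nat.card (Loops a b)

/-- The type of a couple of pair-partitions: the multiset of halved loop sizes. -/
noncomputable def loopType {N : ℕ} (a b : Equiv.Perm (Fin N)) : Multiset ℕ :=
  (Finset.univ : Finset (Loops a b)).val.map fun q => Nat.card (loopSet q) / 2

/-- The multiset of cycle lengths (including fixed points) of a permutation. -/
noncomputable def cycleSizes {N : ℕ} (σ : Equiv.Perm (Fin N)) : Multiset ℕ :=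
  (Finset.univ : Finset (MulAction.orbitRel.Quotient
      (Subgroup.closure ({σ} : Set (Equiv.Perm (Fin N)))) (Fin N))).val.map
    fun q => Nat.card (MulAction.orbitRel.Quotient.orbit q)

/-- `z_μ = μ₁μ₂⋯ ∏ᵢ mᵢ(μ)!`. -/
def zMu {n : ℕ} (μ : n.Partition) : ℕ :=
  μ.parts.prod * ∏ i ∈ μ.parts.toFinset, (μ.parts.count i).factorial

/-- The first pair-partition `S`, pairing `2i` with `2i+1` (0-indexed). -/
def firstPP (n : ℕ) : Equiv.Perm (Fin (2 * n)) where
  toFun x := ⟨2 * ((x : ℕ) / 2) + (1 - (x : ℕ) % 2), by have := x.isLt; omega⟩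
  invFun x := ⟨2 * ((x : ℕ) / 2) + (1 - (x : ℕ) % 2), by have := x.isLt; omega⟩
  left_inv x := by
    apply Fin.ext
    have := x.isLt
    simp only [Fin.val_mk]
    omega
  right_inv x := by
    apply Fin.ext
    have := x.isLt
    simp only [Fin.val_mk]
    omega

/-- Row lengths of a partition (weakly decreasing), 0-indexed; `rowLen lam r = λ_{r+1}`. -/
def rowLen {n : ℕ} (lam : n.Partition) (r : ℕ) : ℕ :=
  ((lam.parts.sort (· ≤ ·)).reverse).getD r 0

/-- `f` maps into the boxes of `2λ`; a box is a pair `(row, column)`, both 0-indexed. -/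
def InBoxes2 {M n : ℕ} (lam : n.Partition) (f : Fin M → ℕ × ℕ) : Prop :=
  ∀ l, (f l).2 < 2 * rowLen lam (f l).1

/-- Condition (P0): `f l` and `f (S₀ l)` are neighbors in `2λ`. -/
def P0cond {M : ℕ} (S0 : Equiv.Perm (Fin M)) (f : Fin M → ℕ × ℕ) : Prop :=
  ∀ l, (f (S0 l)).1 = (f l).1 ∧ (f (S0 l)).2 / 2 = (f l).2 / 2 ∧ (f (S0 l)).2 ≠ (f l).2

/-- Condition (P1): `f l` and `f (S₀ (S₁ l))` are in the same column. -/
def P1cond {M : ℕ} (S0 S1 : Equiv.Perm (Fin M)) (f : Fin M → ℕ × ℕ) : Prop :=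
  ∀ l, (f (S0 (S1 l))).2 = (f l).2

/-- Condition (P2): `f l` and `f (S₂ l)` are in the same row. -/
def P2cond {M : ℕ} (S2 : Equiv.Perm (Fin M)) (f : Fin M → ℕ × ℕ) : Prop :=
  ∀ l, (f (S2 l)).1 = (f l).1

/-- `N²_{S₀,S₁,S₂}(λ)`: the number of functions from `[2k]` to the boxes of `2λ`
satisfying (P0), (P1), (P2). -/
noncomputable def N2 {k n : ℕ} (S0 S1 S2 : Equiv.Perm (Fin (2*k))) (lam : n.Partition) : ℕ :=
  Nat.card {f : Fin (2*k) → ℕ × ℕ //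
    InBoxes2 lam f ∧ P0cond S0 f ∧ P1cond S0 S1 f ∧ P2cond S2 f}

/-- `N̂²_{S₀,S₁,S₂}(λ)`: the number of injective such functions. -/
noncomputable def Nhat2 {k n : ℕ} (S0 S1 S2 : Equiv.Perm (Fin (2*k))) (lam : n.Partition) : ℕ :=
  Nat.card {f : Fin (2*k) → ℕ × ℕ //
    Function.Injective f ∧ InBoxes2 lam f ∧ P0cond S0 f ∧ P1cond S0 S1 f ∧ P2cond S2 f}

/-- `N¹_{S₀,S₁,S₂}(λ)`: the number of functions from `[2k]` to the boxes of `λ` such that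
`f∘S₀ = f`, `f(S₁ l)` is in the same column as `f l`, and `f(S₂ l)` is in the same row. -/
noncomputable def N1 {k n : ℕ} (S0 S1 S2 : Equiv.Perm (Fin (2*k))) (lam : n.Partition) : ℕ :=
  Nat.card {f : Fin (2*k) → ℕ × ℕ //
    (∀ l, (f l).2 < rowLen lam (f l).1) ∧ (∀ l, f (S0 l) = f l) ∧
    (∀ l, (f (S1 l)).2 = (f l).2) ∧ (∀ l, (f (S2 l)).1 = (f l).1)}

/-- `T` is the pair-partition `S̃` of `[2n]` obtained from the pair-partition `S` of `[2k]`
by adjoining the pairs `{2k+1, 2k+2}, …, {2n-1, 2n}` (1-indexed). -/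
def ExtendsPP {k n : ℕ} (S : Equiv.Perm (Fin (2*k))) (T : Equiv.Perm (Fin (2*n))) : Prop :=
  (∀ (x : Fin (2*k)) (y : Fin (2*n)), (x : ℕ) = (y : ℕ) → ((T y : ℕ) = (S x : ℕ))) ∧
  (∀ y : Fin (2*n), 2*k ≤ (y : ℕ) → ((T y : ℕ) = 2 * ((y : ℕ)/2) + (1 - (y : ℕ) % 2)))

end ZonalPP

/-!
Choose `x ≠ y` with `f x = f y`. Conjugating `S₀` by the transposition `(x y)` is an involution
on pair-partitions, and it preserves (P0), (P1), (P2) because (P0) determines `f ∘ S₀` from `f`.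
It reverses the sign `(-1)^{k - |L(S₀,S₁)|}`: by (P0) and (P1), `S₁` exchanges the boxes in even
and odd columns while `S₀ S₁` preserves columns, so the loops of `(S₀, S₁)` are in bijection with
the cycles of `S₀ S₁` on the `k` points whose column has the parity of that of `f x`. On these
points the conjugation multiplies `S₀ S₁` by the transposition `(x y)`, which merges two cycles
or splits one.
-/

namespace ZonalPP

open Finset Equiv Equiv.Perm

section Cycles

lemma not_sameCycle_of_pow_eq_self {α : Type*} [Finite α] {g : Perm α} {x y : α} {m : ℕ}
    (hm : 0 < m) (hx : (g ^ m) x = x) (hy : ∀ j < m, (g ^ j) x ≠ y) : ¬ g.SameCycle x y := by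
  intro h
  obtain ⟨i, hi⟩ := h.exists_nat_pow_eq
  have hper : Function.IsPeriodicPt g m x := by
    rwa [Function.IsPeriodicPt, Function.IsFixedPt, ← coe_pow]
  apply hy (i % m) (Nat.mod_lt _ hm)
  rw [coe_pow, hper.iterate_mod_apply, ← coe_pow, hi]

variable {α : Type*} [Fintype α] [DecidableEq α]

def cycleSet (π : Perm α) (x : α) : Finset α := {y | π.SameCycle x y}

/-- Fixed points count as cycles. -/
def numCycles (π : Perm α) : ℕ := #(univ.image (cycleSet π))

variable {π : Perm α} {s t x y : α}

/-- Up to the first return `m` of the `π`-orbit of `s` to `{s, t}`, the orbit of `s` under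
`swap s t * π` follows the one under `π`; at time `m` it is sent to the other point of `{s, t}`. -/
theorem sameCycle_swap_mul_iff (hst : s ≠ t) :
    (swap s t * π).SameCycle s t ↔ ¬ π.SameCycle s t := by
  have hex : ∃ m, 0 < m ∧ ((π ^ m) s = s ∨ (π ^ m) s = t) :=
    ⟨orderOf π, orderOf_pos π, Or.inl (by rw [pow_orderOf_eq_one, one_apply])⟩
  set m := Nat.find hex
  obtain ⟨hm, hhit⟩ := Nat.find_spec hex
  have hmiss : ∀ j, 0 < j → j < m → (π ^ j) s ≠ s ∧ (π ^ j) s ≠ t := fun j hj hjm => by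
    simpa [not_or] using fun h => Nat.find_min hex hjm ⟨hj, h⟩
  have hσ : ∀ j < m, ((swap s t * π) ^ (j + 1)) s = swap s t ((π ^ (j + 1)) s) := by
    intro j hj
    induction j with
    | zero => simp
    | succ j ih =>
      obtain ⟨h1, h2⟩ := hmiss (j + 1) j.succ_pos (by omega)
      rw [pow_succ' _ (j + 1), mul_apply, ih (by omega), swap_apply_of_ne_of_ne h1 h2,
        pow_succ' π (j + 1), mul_apply, mul_apply]
  have hσm : ((swap s t * π) ^ m) s = swap s t ((π ^ m) s) := by
    have := hσ (m - 1) (by omega)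
    rwa [Nat.sub_add_cancel hm] at this
  have hσlt : ∀ j, 0 < j → j < m → ((swap s t * π) ^ j) s = (π ^ j) s := fun j hj hjm => by
    obtain ⟨h1, h2⟩ := hmiss j hj hjm
    simpa [Nat.sub_add_cancel hj, swap_apply_of_ne_of_ne h1 h2] using hσ (j - 1) (by omega)
  rcases hhit with hs | ht
  · refine iff_of_true ⟨m, by rw [zpow_natCast, hσm, hs, swap_apply_left]⟩ ?_
    refine not_sameCycle_of_pow_eq_self hm hs fun j hj => ?_
    rcases Nat.eq_zero_or_pos j with rfl | hj0
    · simpa using hst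
    · exact (hmiss j hj0 hj).2
  · refine iff_of_false ?_ (not_not.2 ⟨m, by rwa [zpow_natCast]⟩)
    refine not_sameCycle_of_pow_eq_self hm (by rw [hσm, ht, swap_apply_right]) fun j hj => ?_
    rcases Nat.eq_zero_or_pos j with rfl | hj0
    · simpa using hst
    · rw [hσlt j hj0 hj]
      exact (hmiss j hj0 hj).2

lemma mem_cycleSet : y ∈ cycleSet π x ↔ π.SameCycle x y := by
  simp [cycleSet]

lemma cycleSet_eq_cycleSet_iff : cycleSet π x = cycleSet π y ↔ π.SameCycle x y := by
  refine ⟨fun h => mem_cycleSet.1 (h ▸ mem_cycleSet.2 (SameCycle.refl π y)), fun h => ?_⟩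
  ext z
  simp only [mem_cycleSet]
  exact ⟨h.symm.trans, h.trans⟩

lemma cycleSet_swap_mul_of_not_sameCycle (hs : ¬ π.SameCycle x s) (ht : ¬ π.SameCycle x t) :
    cycleSet (swap s t * π) x = cycleSet π x := by
  have hpow : ∀ n : ℕ, ((swap s t * π) ^ n) x = (π ^ n) x := by
    intro n
    induction n with
    | zero => rfl
    | succ n ih =>
      have hx : π.SameCycle x ((π ^ (n + 1)) x) := sameCycle_pow_right.2 (SameCycle.refl π x)
      rw [pow_succ', mul_apply, ih, mul_apply, ← mul_apply π, ← pow_succ',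
        swap_apply_of_ne_of_ne (fun h => hs (by rwa [h] at hx)) (fun h => ht (by rwa [h] at hx))]
  ext y
  simp only [mem_cycleSet]
  constructor
  · intro h
    obtain ⟨n, rfl⟩ := h.exists_nat_pow_eq
    exact hpow n ▸ sameCycle_pow_right.2 (SameCycle.refl π x)
  · intro h
    obtain ⟨n, rfl⟩ := h.exists_nat_pow_eq
    exact hpow n ▸ sameCycle_pow_right.2 (SameCycle.refl _ x)

lemma filter_image_cycleSet_subset_swap_mul :
    {c ∈ univ.image (cycleSet π) | s ∉ c ∧ t ∉ c} ⊆
      {c ∈ univ.image (cycleSet (swap s t * π)) | s ∉ c ∧ t ∉ c} := by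
  intro c hc
  simp only [mem_filter, mem_image, mem_univ, true_and] at hc ⊢
  obtain ⟨⟨x, rfl⟩, hs, ht⟩ := hc
  have h := cycleSet_swap_mul_of_not_sameCycle (mt mem_cycleSet.2 hs) (mt mem_cycleSet.2 ht)
  exact ⟨⟨x, h⟩, hs, ht⟩

lemma filter_image_cycleSet_swap_mul :
    {c ∈ univ.image (cycleSet (swap s t * π)) | s ∉ c ∧ t ∉ c} =
      {c ∈ univ.image (cycleSet π) | s ∉ c ∧ t ∉ c} := by
  refine subset_antisymm ?_ filter_image_cycleSet_subset_swap_mul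
  simpa using filter_image_cycleSet_subset_swap_mul (π := swap s t * π) (s := s) (t := t)

lemma numCycles_eq_card_filter_add (π : Perm α) (s t : α) :
    numCycles π = #{c ∈ univ.image (cycleSet π) | s ∉ c ∧ t ∉ c} +
      if π.SameCycle s t then 1 else 2 := by
  have hrest : {c ∈ univ.image (cycleSet π) | ¬(s ∉ c ∧ t ∉ c)} =
      {cycleSet π s, cycleSet π t} := by
    ext c
    simp only [mem_filter, mem_image, mem_univ, true_and, mem_insert, mem_singleton]
    constructor
    · rintro ⟨⟨x, rfl⟩, hst⟩
      by_cases hs : s ∈ cycleSet π x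
      · exact Or.inl (cycleSet_eq_cycleSet_iff.2 (mem_cycleSet.1 hs))
      · exact Or.inr (cycleSet_eq_cycleSet_iff.2 (mem_cycleSet.1 (not_not.1 (not_and.1 hst hs))))
    · rintro (rfl | rfl)
      · exact ⟨⟨s, rfl⟩, fun h => h.1 (mem_cycleSet.2 (SameCycle.refl π s))⟩
      · exact ⟨⟨t, rfl⟩, fun h => h.2 (mem_cycleSet.2 (SameCycle.refl π t))⟩
  rw [numCycles, ← card_filter_add_card_filter_not (fun c => s ∉ c ∧ t ∉ c), hrest]
  split_ifs with h
  · rw [cycleSet_eq_cycleSet_iff.2 h, pair_eq_singleton, card_singleton]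
  · rw [card_pair (mt cycleSet_eq_cycleSet_iff.1 h)]

theorem numCycles_swap_mul (hst : s ≠ t) :
    numCycles (swap s t * π) + 1 = numCycles π ∨ numCycles π + 1 = numCycles (swap s t * π) := by
  rw [numCycles_eq_card_filter_add π s t, numCycles_eq_card_filter_add _ s t,
    filter_image_cycleSet_swap_mul]
  simp only [sameCycle_swap_mul_iff hst]
  by_cases h : π.SameCycle s t <;> simp [h]

lemma numCycles_le_card (π : Perm α) : numCycles π ≤ Fintype.card α :=
  card_image_le

lemma neg_one_pow_sub_numCycles_swap_mul (hst : s ≠ t) {k : ℕ} (hk : Fintype.card α = k) :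
    (-1 : ℤ) ^ (k - numCycles (swap s t * π)) = -(-1) ^ (k - numCycles π) := by
  have h := numCycles_le_card π
  have h' := numCycles_le_card (swap s t * π)
  rcases numCycles_swap_mul (π := π) hst with e | e
  · rw [show k - numCycles (swap s t * π) = k - numCycles π + 1 by omega, pow_succ, mul_neg_one]
  · rw [show k - numCycles π = k - numCycles (swap s t * π) + 1 by omega, pow_succ, mul_neg_one,
      neg_neg]

lemma card_quotient_sameCycle (π : Perm α) :
    Nat.card (Quotient (SameCycle.setoid π)) = numCycles π := by
  let _ : Fintype (Quotient (SameCycle.setoid π)) := Fintype.ofFinite _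
  let g : Quotient (SameCycle.setoid π) → Finset α :=
    Quotient.lift (cycleSet π) fun _ _ h => cycleSet_eq_cycleSet_iff.2 h
  have hg : Function.Injective g := by
    rintro ⟨x⟩ ⟨y⟩ h
    exact Quotient.sound (cycleSet_eq_cycleSet_iff.1 h)
  have himage : univ.image (cycleSet π) = univ.image g := by
    ext c
    simp [g, Quotient.exists]
  rw [numCycles, himage, card_image_of_injective _ hg, card_univ, Nat.card_eq_fintype_card]

end Cycles

section Loops

variable {β : Type*} {a b : Perm β}

lemma inv_eq_self_of_involutive {g : Perm β} (hg : Function.Involutive g) : g⁻¹ = g :=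
  Function.Involutive.symm_eq_self_of_involutive g hg

lemma involutive_conj {s : Perm β} (hs : Function.Involutive s) (g : Perm β) :
    Function.Involutive (g * s * g⁻¹) :=
  fun z => by simp [hs _]

/-- `b` conjugates `a * b` to its inverse. -/
lemma sameCycle_apply_apply (ha : Function.Involutive a) (hb : Function.Involutive b) {x y : β}
    (h : (a * b).SameCycle x y) : (a * b).SameCycle (b x) (b y) := by
  have hconj : b * (a * b) * b⁻¹ = (a * b)⁻¹ := by
    rw [mul_inv_rev, inv_eq_self_of_involutive ha, inv_eq_self_of_involutive hb]
    ext z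
    simp [hb _]
  have := sameCycle_conj (g := b) (f := a * b) (x := x) (y := y)
  rw [hconj, sameCycle_inv, inv_eq_self_of_involutive hb] at this
  exact this.1 h

lemma sameCycle_or_sameCycle_of_mem_closure (ha : Function.Involutive a)
    (hb : Function.Involutive b) {g : Perm β} (hg : g ∈ Subgroup.closure {a, b}) (x : β) :
    (a * b).SameCycle x (g x) ∨ (a * b).SameCycle (b x) (g x) := by
  induction hg using Subgroup.closure_induction generalizing x with
  | mem g hg =>
    rcases hg with rfl | rfl
    · exact Or.inr ⟨1, by simp [hb x]⟩
    · exact Or.inr (SameCycle.refl _ _)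
  | one => exact Or.inl (SameCycle.refl _ _)
  | mul g h _ _ ihg ihh =>
    rw [mul_apply]
    rcases ihh x with hh | hh <;> rcases ihg (h x) with hg | hg
    · exact Or.inl (hh.trans hg)
    · exact Or.inr ((sameCycle_apply_apply ha hb hh).trans hg)
    · exact Or.inr (hh.trans hg)
    · have := sameCycle_apply_apply ha hb hh
      rw [hb x] at this
      exact Or.inl (this.trans hg)
  | inv g _ ihg =>
    rcases ihg (g⁻¹ x) with hg | hg <;> rw [show g (g⁻¹ x) = x from g.apply_symm_apply x] at hg
    · exact Or.inl hg.symm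
    · have := sameCycle_apply_apply ha hb hg
      rw [hb] at this
      exact Or.inr this.symm

lemma of_sameCycle_of_forall_apply_iff {π : Perm β} {p : β → Prop} (hπ : ∀ x, p (π x) ↔ p x)
    {x y : β} (h : π.SameCycle x y) (hx : p x) : p y := by
  obtain ⟨n, rfl⟩ := h
  simpa using ((π.subtypePerm hπ ^ n) ⟨x, hx⟩).2

variable {p : β → Prop}

lemma mem_orbit_closure_iff_sameCycle (ha : Function.Involutive a) (hb : Function.Involutive b)
    (hbp : ∀ x, p (b x) ↔ ¬ p x) (habp : ∀ x, p ((a * b) x) ↔ p x) {x y : β}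
    (hx : p x) (hy : p y) :
    y ∈ MulAction.orbit (Subgroup.closure {a, b}) x ↔ (a * b).SameCycle x y := by
  rw [MulAction.mem_orbit_iff]
  constructor
  · rintro ⟨⟨g, hg⟩, rfl⟩
    refine (sameCycle_or_sameCycle_of_mem_closure ha hb hg x).resolve_right fun h => ?_
    exact (hbp x).1 (of_sameCycle_of_forall_apply_iff habp h.symm hy) hx
  · rintro ⟨n, rfl⟩
    have hab : a * b ∈ Subgroup.closure {a, b} :=
      Subgroup.mul_mem _ (Subgroup.subset_closure (by simp)) (Subgroup.subset_closure (by simp))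
    exact ⟨⟨(a * b) ^ n, Subgroup.zpow_mem _ hab n⟩, rfl⟩

/-- Each orbit of `⟨a, b⟩` is a cycle of `a * b` inside `p` together with its image under `b`. -/
theorem card_orbitRel_closure_eq_numCycles [Fintype β] [DecidableEq β] [DecidablePred p]
    (ha : Function.Involutive a) (hb : Function.Involutive b) (hbp : ∀ x, p (b x) ↔ ¬ p x)
    (habp : ∀ x, p ((a * b) x) ↔ p x) :
    Nat.card (MulAction.orbitRel.Quotient (Subgroup.closure {a, b}) β) =
      numCycles ((a * b).subtypePerm habp) := by
  rw [← card_quotient_sameCycle]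
  symm
  refine Nat.card_congr (Equiv.ofBijective (Quotient.map' Subtype.val fun x y h => ?_) ⟨?_, ?_⟩)
  · exact (mem_orbit_closure_iff_sameCycle ha hb hbp habp y.2 x.2).2
      (sameCycle_subtypePerm.1 h).symm
  · rintro ⟨x⟩ ⟨y⟩ h
    exact Quotient.sound (sameCycle_subtypePerm.2
      ((mem_orbit_closure_iff_sameCycle ha hb hbp habp y.2 x.2).1 (Quotient.exact h)).symm)
  · rintro ⟨z⟩
    by_cases hz : p z
    · exact ⟨⟦⟨z, hz⟩⟧, rfl⟩
    · exact ⟨⟦⟨b z, (hbp z).2 hz⟩⟧, Quotient.sound ⟨⟨b, Subgroup.subset_closure (by simp)⟩, rfl⟩⟩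

lemma two_mul_card_subtype_of_apply_iff_not [Fintype β] [DecidablePred p]
    (hbp : ∀ x, p (b x) ↔ ¬ p x) :
    2 * Fintype.card {x // p x} = Fintype.card β := by
  have e : Fintype.card {x // p x} = Fintype.card {x // ¬ p x} :=
    Fintype.card_congr (subtypeEquiv b fun x => by rw [hbp, not_not])
  have := Fintype.card_subtype_compl p
  have := Fintype.card_subtype_le p
  omega

lemma subtypePerm_conj_swap_mul [DecidableEq β] {x y : β} (hx : p x) (hy : p y)
    (hbp : ∀ z, p z → ¬ p (b z)) (h : ∀ z, p ((a * b) z) ↔ p z)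
    (h' : ∀ z, p ((swap x y * a * swap x y * b) z) ↔ p z) :
    (swap x y * a * swap x y * b).subtypePerm h' = swap ⟨x, hx⟩ ⟨y, hy⟩ * (a * b).subtypePerm h := by
  ext ⟨z, hz⟩
  have hzx : b z ≠ x := fun e => hbp z hz (e ▸ hx)
  have hzy : b z ≠ y := fun e => hbp z hz (e ▸ hy)
  simp [swap_apply_of_ne_of_ne hzx hzy, swap_apply_def, Subtype.ext_iff]
  split_ifs <;> rfl

end Loops

section Conditions

variable {N : ℕ} {S0 S1 : Perm (Fin N)} {f : Fin N → ℕ × ℕ}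

lemma IsPairPartition.conj {s : Perm (Fin N)} (hs : IsPairPartition s) (g : Perm (Fin N)) :
    IsPairPartition (g * s * g⁻¹) := by
  refine ⟨involutive_conj hs.1 g, fun z hz => hs.2 (g⁻¹ z) ?_⟩
  simp only [mul_apply] at hz
  exact eq_inv_iff_eq.2 hz

lemma apply_eq_apply_of_P0cond (hP0 : P0cond S0 f) {x y : Fin N} (h : f x = f y) :
    f (S0 x) = f (S0 y) := by
  obtain ⟨r1, c1, n1⟩ := hP0 x
  obtain ⟨r2, c2, n2⟩ := hP0 y
  rw [h] at r1 c1 n1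
  ext <;> omega

lemma apply_conj_swap_of_P0cond (hP0 : P0cond S0 f) {x y : Fin N} (h : f x = f y) (l : Fin N) :
    f ((swap x y * S0 * swap x y) l) = f (S0 l) := by
  have hswap : ∀ z, f (swap x y z) = f z := fun z => by
    rcases eq_or_ne z x with rfl | hx
    · rw [swap_apply_left, h]
    rcases eq_or_ne z y with rfl | hy
    · rw [swap_apply_right, h]
    rw [swap_apply_of_ne_of_ne hx hy]
  simp only [mul_apply, hswap]
  exact apply_eq_apply_of_P0cond hP0 (hswap l)

lemma P0cond_congr {S0' : Perm (Fin N)} (h : ∀ l, f (S0 l) = f (S0' l)) :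
    P0cond S0 f ↔ P0cond S0' f := by
  simp only [P0cond, h]

lemma P1cond_congr {S0' : Perm (Fin N)} (h : ∀ l, f (S0 l) = f (S0' l)) :
    P1cond S0 S1 f ↔ P1cond S0' S1 f := by
  simp only [P1cond, h]

/-- (P0) determines `f ∘ S₀` from `f`, so (P0) and (P1) only see `S₀` through `f`. -/
lemma P0cond_and_P1cond_conj_swap_iff {x y : Fin N} (h : f x = f y) :
    P0cond (swap x y * S0 * swap x y) f ∧ P1cond (swap x y * S0 * swap x y) S1 f ↔
      P0cond S0 f ∧ P1cond S0 S1 f := by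
  constructor
  · rintro ⟨hP0, hP1⟩
    have e := apply_conj_swap_of_P0cond hP0 h
    simp only [mul_assoc, swap_mul_self_mul, swap_mul_self, mul_one] at e
    exact ⟨(P0cond_congr e).2 hP0, (P1cond_congr e).2 hP1⟩
  · rintro ⟨hP0, hP1⟩
    have e := apply_conj_swap_of_P0cond hP0 h
    exact ⟨(P0cond_congr e).2 hP0, (P1cond_congr e).2 hP1⟩

lemma col_apply_mod_two_ne (hP0 : P0cond S0 f) (hP1 : P1cond S0 S1 f) (x : Fin N) :
    (f (S1 x)).2 % 2 ≠ (f x).2 % 2 := by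
  have h1 := hP1 x
  obtain ⟨-, h2, h3⟩ := hP0 (S1 x)
  omega

end Conditions

theorem neg_one_pow_sub_numLoops_conj_swap {k : ℕ} {S0 S1 : Perm (Fin (2 * k))}
    {f : Fin (2 * k) → ℕ × ℕ} (h0 : Function.Involutive S0) (h1 : Function.Involutive S1)
    (hP0 : P0cond S0 f) (hP1 : P1cond S0 S1 f) {x y : Fin (2 * k)} (hxy : x ≠ y)
    (hf : f x = f y) :
    (-1 : ℤ) ^ (k - numLoops (swap x y * S0 * swap x y) S1) = -(-1) ^ (k - numLoops S0 S1) := by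
  have hP1' := ((P0cond_and_P1cond_conj_swap_iff hf).2 ⟨hP0, hP1⟩).2
  let p : Fin (2 * k) → Prop := fun z => (f z).2 % 2 = (f x).2 % 2
  have hbp : ∀ z, p (S1 z) ↔ ¬ p z := fun z => by
    have := col_apply_mod_two_ne hP0 hP1 z
    simp only [p]
    omega
  have habp : ∀ z, p ((S0 * S1) z) ↔ p z := fun z => by
    simp only [p, mul_apply, hP1 z]
  have habp' : ∀ z, p ((swap x y * S0 * swap x y * S1) z) ↔ p z := fun z => by
    simp only [p, mul_apply (swap x y * S0 * swap x y), hP1' z]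
  have hcard : Fintype.card {z // p z} = k := by
    have := two_mul_card_subtype_of_apply_iff_not hbp
    rw [Fintype.card_fin] at this
    omega
  have hy : p y := by simp only [p, hf]
  rw [numLoops, numLoops, card_orbitRel_closure_eq_numCycles h0 h1 hbp habp,
    card_orbitRel_closure_eq_numCycles (by simpa using involutive_conj h0 (swap x y)) h1 hbp habp',
    subtypePerm_conj_swap_mul (p := p) rfl hy (fun z hz h => (hbp z).1 h hz) habp habp']
  exact neg_one_pow_sub_numCycles_swap_mul (by simpa [Subtype.ext_iff] using hxy) hcard

open Classical in
theorem statement14_general {k : ℕ} (S1 S2 : Equiv.Perm (Fin (2*k)))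
    (h1 : IsPairPartition S1)
    (f : Fin (2*k) → ℕ × ℕ)
    (hninj : ¬ Function.Injective f) :
    ∑ S0 ∈ Finset.univ.filter (fun S0 : Equiv.Perm (Fin (2*k)) => IsPairPartition S0),
        (-1 : ℤ) ^ (k - numLoops S0 S1) *
          (if P0cond S0 f ∧ P1cond S0 S1 f ∧ P2cond S2 f then 1 else 0) = 0 := by
  obtain ⟨x, y, hf, hxy⟩ := Function.not_injective_iff.1 hninj
  have hcancel : ∀ S0 ∈ univ.filter (fun S0 : Perm (Fin (2 * k)) => IsPairPartition S0),
      (-1 : ℤ) ^ (k - numLoops S0 S1) *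
          (if P0cond S0 f ∧ P1cond S0 S1 f ∧ P2cond S2 f then 1 else 0) +
        (-1 : ℤ) ^ (k - numLoops (swap x y * S0 * swap x y) S1) *
          (if P0cond (swap x y * S0 * swap x y) f ∧ P1cond (swap x y * S0 * swap x y) S1 f ∧
            P2cond S2 f then 1 else 0) = 0 := by
    intro S0 hS0
    simp only [← and_assoc, P0cond_and_P1cond_conj_swap_iff hf]
    split_ifs with hc
    · rw [neg_one_pow_sub_numLoops_conj_swap (mem_filter.1 hS0).2.1 h1.1 hc.1.1 hc.1.2 hxy hf]
      ring
    · ring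
  refine sum_involution (fun S0 _ => swap x y * S0 * swap x y) hcancel
    (fun S0 hS0 hne heq => hne ?_) (fun S0 hS0 => ?_) (fun S0 _ => by simp [mul_assoc])
  · have := hcancel S0 hS0
    rw [heq] at this
    omega
  · simpa using (mem_filter.1 hS0).2.conj (swap x y)

open Classical in
/-- For a non-injective function `f` into the boxes of `2λ`,
`Σ_{S₀} (-1)^{k-|L(S₀,S₁)|} [f satisfies (P0),(P1),(P2) w.r.t. (S₀,S₁,S₂)] = 0`. -/
theorem statement14 {k n : ℕ} (S1 S2 : Equiv.Perm (Fin (2*k)))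
    (h1 : IsPairPartition S1) (h2 : IsPairPartition S2)
    (lam : Nat.Partition n) (f : Fin (2*k) → ℕ × ℕ)
    (hbox : InBoxes2 lam f) (hninj : ¬ Function.Injective f) :
    ∑ S0 ∈ Finset.univ.filter (fun S0 : Equiv.Perm (Fin (2*k)) => IsPairPartition S0),
        (-1 : ℤ) ^ (k - numLoops S0 S1) *
          (if P0cond S0 f ∧ P1cond S0 S1 f ∧ P2cond S2 f then 1 else 0) = 0 :=
  statement14_general S1 S2 h1 f hninj

end ZonalPP
end

section
/- Let S₀, S₁, S₂ be pair-partitions of [2k], let d ≥ 1, let p₁,…,p_d and q₁ ≥ q₂ ≥ … ≥ q_d be positive integers, and let λ = p×q be the partition consisting of p₁ parts equal to q₁, then p₂ parts equal to q₂, etc. Then N^{(1)}_{S₀,S₁,S₂}(λ) = Σ_{φ} ∏_{ℓ ∈ L(S₀,S₂)} p_{φ(ℓ)} · ∏_{m ∈ L(S₀,S₁)} q_{ψ(m)}, where the sum runs over all functions φ from the set of loops L(S₀,S₂) to {1,…,d}, and ψ(m) := max{ φ(ℓ) : ℓ ∈ L(S₀,S₂) and ℓ ∩ m ≠ ∅ }.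 -/
open scoped BigOperators

namespace ZonalPP

/-- Stanley's coordinates: the partition `p × q` consisting of `p 0` parts equal to `q 0`,
then `p 1` parts equal to `q 1`, etc. -/
def stanley {d : ℕ} (p q : Fin d → ℕ) (hq : ∀ i, 0 < q i) :
    Nat.Partition (∑ i, p i * q i) where
  parts := Finset.univ.val.bind fun i => Multiset.replicate (p i) (q i)
  parts_pos := by
    intro i hi
    rw [Multiset.mem_bind] at hi
    obtain ⟨j, -, hj⟩ := hi
    rw [Multiset.eq_of_mem_replicate hj]
    exact hq j
  parts_sum := by
    simp [Multiset.sum_bind, Multiset.sum_replicate, Finset.sum, smul_eq_mul]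

open Classical in
/-- Every loop of `L(a,b)` meets some loop of `L(a,c)`. -/
lemma adj_nonempty {N : ℕ} (a b c : Equiv.Perm (Fin N)) (m : Loops a b) :
    (Finset.univ.filter fun ℓ : Loops a c =>
        (loopSet m ∩ loopSet ℓ).Nonempty).Nonempty := by
  classical
  obtain ⟨x, hx⟩ : (loopSet m).Nonempty := by
    refine ⟨Quotient.out m, ?_⟩
    rw [loopSet, MulAction.orbitRel.Quotient.mem_orbit]
    exact Quotient.out_eq' m
  refine ⟨(Quotient.mk'' x : Loops a c), ?_⟩
  rw [Finset.mem_filter]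
  refine ⟨Finset.mem_univ _, ⟨x, hx, ?_⟩⟩
  rw [loopSet, MulAction.orbitRel.Quotient.mem_orbit]

end ZonalPP

/-!
A function counted by `N1` has its row constant on the loops of `L(S₀,S₂)` and its column
constant on the loops of `L(S₀,S₁)`, so it amounts to a row `R ℓ` for each `ℓ ∈ L(S₀,S₂)` and a
column `C m` for each `m ∈ L(S₀,S₁)`, with `C m` smaller than the length of `R ℓ` whenever `ℓ`
meets `m`. The rows of `p × q` of positive length are enumerated by the pairs `(i, j)` with
`j < pᵢ`, row `(i, j)` having length `qᵢ` (the order of the rows plays no role). Writing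
`R ℓ = (φ ℓ, j ℓ)`, the offsets `j` contribute `∏ p_{φ(ℓ)}`, and since `q` is nonincreasing,
`C m` has exactly `q_{ψ(m)}` choices.
-/

def Equiv.arrowSigmaEquivSigmaPi (ι : Type*) {I : Type*} (κ : I → Type*) :
    (ι → Σ i, κ i) ≃ Σ φ : ι → I, ∀ ℓ, κ (φ ℓ) where
  toFun R := ⟨fun ℓ => (R ℓ).1, fun ℓ => (R ℓ).2⟩
  invFun F ℓ := ⟨F.1 ℓ, F.2 ℓ⟩
  left_inv _ := rfl
  right_inv _ := rfl

theorem Fintype.sum_arrow_sigma {ι I M : Type*} [Fintype ι] [DecidableEq ι] [Fintype I]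
    [AddCommMonoid M] {κ : I → Type*} [∀ i, Fintype (κ i)] (g : (ι → I) → M) :
    ∑ R : ι → Σ i, κ i, g (fun ℓ => (R ℓ).1) =
      ∑ φ : ι → I, (∏ ℓ, Fintype.card (κ (φ ℓ))) • g φ := by
  rw [← (Equiv.arrowSigmaEquivSigmaPi ι κ).symm.sum_comp, Fintype.sum_sigma]
  simp [Equiv.arrowSigmaEquivSigmaPi, Fintype.card_pi]

theorem Fintype.exists_equiv_of_map_univ_eq {α γ β : Type*} [Fintype α] [Fintype γ]
    [DecidableEq β] {f : α → β} {g : γ → β}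
    (h : Finset.univ.val.map f = Finset.univ.val.map g) : ∃ E : α ≃ γ, ∀ a, g (E a) = f a := by
  have hfiber : ∀ y, Fintype.card {a // f a = y} = Fintype.card {c // g c = y} := by
    intro y
    have := congrArg (Multiset.count y) h
    simp only [Multiset.count_map] at this
    simpa [Fintype.card_subtype, Finset.card_def, Finset.filter_val, eq_comm] using this
  exact ⟨(Equiv.sigmaFiberEquiv f).symm.trans ((Equiv.sigmaCongrRight fun y =>
    Fintype.equivOfCardEq (hfiber y)).trans (Equiv.sigmaFiberEquiv g)),
    fun a => (Fintype.equivOfCardEq (hfiber (f a)) ⟨a, rfl⟩).2⟩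

theorem card_subtype_forall_lt {ι κ : Type*} [Fintype ι] [Fintype κ] [DecidableEq κ]
    (b : ι → κ → ℕ) :
    Nat.card {RC : ι × (κ → ℕ) // ∀ m, RC.2 m < b RC.1 m} = ∑ R, ∏ m, b R m := by
  have e : {RC : ι × (κ → ℕ) // ∀ m, RC.2 m < b RC.1 m} ≃ Σ R, ∀ m, Fin (b R m) :=
    (Equiv.subtypeProdEquivSigmaSubtype fun R (C : κ → ℕ) => ∀ m, C m < b R m).trans
      (Equiv.sigmaCongrRight fun R =>
        Equiv.subtypePiEquivPi.trans (Equiv.piCongrRight fun m => Fin.equivSubtype.symm))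
  rw [Nat.card_congr e, Nat.card_eq_fintype_card, Fintype.card_sigma]
  simp

theorem card_reindex_rows {X L M α : Type*} {π₁ : X → M} {π₂ : X → L}
    (hπ₂ : Function.Surjective π₂) {ρ : ℕ → ℕ} (E : α ≃ {r // 0 < ρ r}) :
    Nat.card {RC : (L → ℕ) × (M → ℕ) // ∀ x, RC.2 (π₁ x) < ρ (RC.1 (π₂ x))} =
      Nat.card {RC : (L → α) × (M → ℕ) // ∀ x, RC.2 (π₁ x) < ρ (E (RC.1 (π₂ x)))} :=
  Nat.card_congr
    { toFun := fun RC =>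
        ⟨(fun ℓ => E.symm ⟨RC.1.1 ℓ, by
            obtain ⟨x, rfl⟩ := hπ₂ ℓ
            exact (Nat.zero_le _).trans_lt (RC.2 x)⟩, RC.1.2), by simpa using RC.2⟩
      invFun := fun RC => ⟨(fun ℓ => E (RC.1.1 ℓ), RC.1.2), RC.2⟩
      left_inv := fun RC => by ext <;> simp
      right_inv := fun RC => by ext <;> simp }

theorem apply_eq_of_mem_closure_pair {α β : Type*} {a b : Equiv.Perm α} {r : α → β}
    (ha : ∀ x, r (a x) = r x) (hb : ∀ x, r (b x) = r x) {g : Equiv.Perm α}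
    (hg : g ∈ Subgroup.closure ({a, b} : Set (Equiv.Perm α))) (x : α) :
    r (g x) = r x := by
  induction hg using Subgroup.closure_induction generalizing x with
  | mem g hg =>
    rcases hg with rfl | rfl
    exacts [ha x, hb x]
  | one => rfl
  | mul g h _ _ ihg ihh => rw [Equiv.Perm.mul_apply, ihg, ihh]
  | inv g _ ihg => simpa using (ihg (g⁻¹ x)).symm

theorem Antitone.lt_apply_sup'_iff {ι α : Type*} [LinearOrder α] {q : α → ℕ} (hq : Antitone q)
    {s : Finset ι} (hs : s.Nonempty) (φ : ι → α) (c : ℕ) :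
    c < q (s.sup' hs φ) ↔ ∀ i ∈ s, c < q (φ i) := by
  refine ⟨fun h i hi => h.trans_le (hq (Finset.le_sup' φ hi)), fun h => ?_⟩
  obtain ⟨i, hi, hsup⟩ := Finset.exists_mem_eq_sup' hs φ
  exact hsup ▸ h i hi

namespace ZonalPP

section Loops

variable {N : ℕ} {a b : Equiv.Perm (Fin N)}

def Loops.mk (x : Fin N) : Loops a b := Quotient.mk'' x

theorem Loops.mk_surjective : Function.Surjective (Loops.mk : Fin N → Loops a b) :=
  Quotient.mk''_surjective

theorem Loops.mem_loopSet_iff {x : Fin N} {m : Loops a b} : x ∈ loopSet m ↔ Loops.mk x = m :=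
  MulAction.orbitRel.Quotient.mem_orbit

theorem Loops.mk_eq_of_mem_closure {g : Equiv.Perm (Fin N)}
    (hg : g ∈ Subgroup.closure ({a, b} : Set (Equiv.Perm (Fin N)))) (x : Fin N) :
    (Loops.mk (g x) : Loops a b) = Loops.mk x :=
  Quotient.sound' ⟨⟨g, hg⟩, rfl⟩

@[simp] theorem Loops.mk_apply_left (x : Fin N) : (Loops.mk (a x) : Loops a b) = Loops.mk x :=
  Loops.mk_eq_of_mem_closure (Subgroup.subset_closure (Set.mem_insert a {b})) x

@[simp] theorem Loops.mk_apply_right (x : Fin N) : (Loops.mk (b x) : Loops a b) = Loops.mk x :=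
  Loops.mk_eq_of_mem_closure (Subgroup.subset_closure (Set.mem_insert_of_mem a rfl)) x

def Loops.lift {β : Type*} (r : Fin N → β) (ha : ∀ x, r (a x) = r x)
    (hb : ∀ x, r (b x) = r x) : Loops a b → β :=
  Quotient.lift r fun _ _ ⟨g, hg⟩ => hg ▸ apply_eq_of_mem_closure_pair ha hb g.2 _

end Loops

theorem N1_eq_card_loops {k n : ℕ} (S0 S1 S2 : Equiv.Perm (Fin (2*k))) (lam : n.Partition) :
    N1 S0 S1 S2 lam = Nat.card {RC : (Loops S0 S2 → ℕ) × (Loops S0 S1 → ℕ) //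
      ∀ x, RC.2 (Loops.mk x) < rowLen lam (RC.1 (Loops.mk x))} :=
  Nat.card_congr
    { toFun := fun f =>
        ⟨(Loops.lift (fun x => (f.1 x).1) (fun x => congrArg Prod.fst (f.2.2.1 x)) f.2.2.2.2,
          Loops.lift (fun x => (f.1 x).2) (fun x => congrArg Prod.snd (f.2.2.1 x)) f.2.2.2.1),
          f.2.1⟩
      invFun := fun RC =>
        ⟨fun x => (RC.1.1 (Loops.mk x), RC.1.2 (Loops.mk x)), RC.2, by simp, by simp, by simp⟩
      left_inv := fun _ => rfl
      right_inv := fun RC => by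
        ext ℓ <;> induction ℓ using Quotient.inductionOn' <;> rfl }

open Classical in
/-- `ψ(m)` of the statement: the largest value of `φ` on a loop meeting `m`. -/
noncomputable def maxMeeting {N d : ℕ} {a b c : Equiv.Perm (Fin N)} (φ : Loops a c → Fin d)
    (m : Loops a b) : Fin d :=
  Finset.sup' (Finset.univ.filter fun ℓ : Loops a c => (loopSet m ∩ loopSet ℓ).Nonempty)
    (adj_nonempty a b c m) φ

theorem forall_mk_lt_iff {N d : ℕ} {a b c : Equiv.Perm (Fin N)} {q : Fin d → ℕ}
    (hq : Antitone q) (φ : Loops a c → Fin d) (C : Loops a b → ℕ) :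
    (∀ x, C (Loops.mk x) < q (φ (Loops.mk x))) ↔ ∀ m, C m < q (maxMeeting φ m) := by
  simp only [maxMeeting, hq.lt_apply_sup'_iff, Finset.mem_filter, Finset.mem_univ, true_and]
  simp only [Set.Nonempty, Set.mem_inter_iff, Loops.mem_loopSet_iff]
  constructor
  · rintro h m ℓ ⟨x, rfl, rfl⟩
    exact h x
  · exact fun h x => h _ _ ⟨x, rfl, rfl⟩

theorem exists_equiv_rowLen_pos {n : ℕ} (lam : n.Partition) {α : Type*} [Fintype α]
    {f : α → ℕ} (h : lam.parts = Finset.univ.val.map f) :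
    ∃ E : α ≃ {r // 0 < rowLen lam r}, ∀ a, rowLen lam (E a) = f a := by
  obtain ⟨L, hrow, hL⟩ : ∃ L : List ℕ, (∀ r, rowLen lam r = L.getD r 0) ∧
      (L : Multiset ℕ) = lam.parts := ⟨_, fun _ => rfl, by simp⟩
  have hpos : ∀ r, r < L.length ↔ 0 < rowLen lam r := by
    intro r
    rw [hrow, List.getD_eq_getElem?_getD]
    by_cases hr : r < L.length
    · simpa [hr] using lam.parts_pos (hL ▸ Multiset.mem_coe.2 (List.getElem_mem hr))
    · simp [hr]
  obtain ⟨E, hE⟩ := Fintype.exists_equiv_of_map_univ_eq (f := f)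
    (g := fun r : Fin L.length => L[(r : ℕ)])
    (by rw [← h, Fin.univ_val_map, List.ofFn_getElem, hL])
  refine ⟨E.trans (Fin.equivSubtype.trans (Equiv.subtypeEquivRight hpos)), fun a => ?_⟩
  simp [hrow, ← hE a]

theorem stanley_parts {d : ℕ} (p q : Fin d → ℕ) (hq : ∀ i, 0 < q i) :
    (stanley p q hq).parts = Finset.univ.val.map fun t : (Σ i, Fin (p i)) => q t.1 := by
  rw [← Finset.univ_sigma_univ]
  simp [stanley, Finset.sigma, Multiset.sigma, Multiset.map_bind, Function.comp_def,
    Multiset.coe_replicate]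

open Classical in
theorem statement15_general {k d : ℕ}
    (S0 S1 S2 : Equiv.Perm (Fin (2*k)))
    (p q : Fin d → ℕ) (hq : ∀ i, 0 < q i)
    (hmono : ∀ i j : Fin d, i ≤ j → q j ≤ q i) :
    N1 S0 S1 S2 (stanley p q hq) =
      ∑ φ : Loops S0 S2 → Fin d,
        (∏ ℓ : Loops S0 S2, p (φ ℓ)) *
          ∏ m : Loops S0 S1,
            q (Finset.sup' (Finset.univ.filter fun ℓ : Loops S0 S2 =>
                (loopSet m ∩ loopSet ℓ).Nonempty) (adj_nonempty S0 S1 S2 m) φ) := by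
  obtain ⟨E, hE⟩ := exists_equiv_rowLen_pos _ (stanley_parts p q hq)
  rw [N1_eq_card_loops, card_reindex_rows Loops.mk_surjective E]
  simp only [hE]
  rw [Nat.card_congr (Equiv.subtypeEquivRight
      fun RC : (Loops S0 S2 → Σ i, Fin (p i)) × (Loops S0 S1 → ℕ) =>
        forall_mk_lt_iff hmono (fun ℓ => (RC.1 ℓ).1) RC.2),
    card_subtype_forall_lt fun (R : Loops S0 S2 → Σ i, Fin (p i)) m =>
      q (maxMeeting (fun ℓ => (R ℓ).1) m),
    Fintype.sum_arrow_sigma fun φ => ∏ m, q (maxMeeting φ m)]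
  simp only [Fintype.card_fin, smul_eq_mul, maxMeeting]

open Classical in
/-- Expression of `N¹_{S₀,S₁,S₂}(p × q)` in Stanley's coordinates:
`N¹ = Σ_φ ∏_{ℓ ∈ L(S₀,S₂)} p_{φ(ℓ)} ∏_{m ∈ L(S₀,S₁)} q_{ψ(m)}`, where `φ` runs over all
functions from the loops of `L(S₀,S₂)` to `{1,…,d}` and `ψ(m)` is the maximum of `φ(ℓ)`
over the loops `ℓ` of `L(S₀,S₂)` meeting `m`. -/
theorem statement15 {k d : ℕ} (hd : 1 ≤ d)
    (S0 S1 S2 : Equiv.Perm (Fin (2*k)))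
    (h0 : IsPairPartition S0) (h1 : IsPairPartition S1) (h2 : IsPairPartition S2)
    (p q : Fin d → ℕ) (hp : ∀ i, 0 < p i) (hq : ∀ i, 0 < q i)
    (hmono : ∀ i j : Fin d, i ≤ j → q j ≤ q i) :
    N1 S0 S1 S2 (stanley p q hq) =
      ∑ φ : Loops S0 S2 → Fin d,
        (∏ ℓ : Loops S0 S2, p (φ ℓ)) *
          ∏ m : Loops S0 S1,
            q (Finset.sup' (Finset.univ.filter fun ℓ : Loops S0 S2 =>
                (loopSet m ∩ loopSet ℓ).Nonempty) (adj_nonempty S0 S1 S2 m) φ) :=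
  statement15_general S0 S1 S2 p q hq hmono

end ZonalPP
end
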